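/- arXiv:2212.00127 — 3 statements merged into one kernel-verified Lean document; each statement's English description precedes it below -/
import Mathlib

section
/- Let s be an element of a field with s² = -t and s ≠ 0. Then (t·zᵢ + zⱼ)·s·(zᵢ - zₖ)·(t·zⱼ + zₖ) = s·(zᵢ - zⱼ)·s·(zᵢ - zₖ)·s·(zⱼ - zₖ) + (s + 1/s)·s·(zᵢ - zⱼ)·(t·zᵢ + zₖ)·s·(zⱼ - zₖ) + (t·zᵢ + zⱼ)·(t·zᵢ + zₖ)·s·(zⱼ - zₖ) + s·(zᵢ - zⱼ)·(t·zᵢ + zₖ)·(t·zⱼ + zₖ). -/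
theorem stmt2 {F : Type*} [Field F] (zi zj zk t s : F) (hs : s ^ 2 = -t) (hs0 : s ≠ 0) :
    (t * zi + zj) * (s * (zi - zk)) * (t * zj + zk) =
      s * (zi - zj) * (s * (zi - zk)) * (s * (zj - zk)) +
      (s + 1 / s) * (s * (zi - zj)) * (t * zi + zk) * (s * (zj - zk)) +
      (t * zi + zj) * (t * zi + zk) * (s * (zj - zk)) +
      s * (zi - zj) * (t * zi + zk) * (t * zj + zk) := by
  have ht : t = -(s ^ 2) := by rw [hs]; ring
  subst ht
  field_simp
  ring
end

section
/- Let s be an element of a field with s² = -t and s ≠ 0. Then (t·zⱼ + zᵢ)·s·(zᵢ - zₖ)·(t·zₖ + zⱼ) = s·(zᵢ - zⱼ)·s·(zᵢ - zₖ)·s·(zⱼ - zₖ) - (s + 1/s)·s·(zᵢ - zⱼ)·(t·zₖ + zᵢ)·s·(zⱼ - zₖ) + (t·zⱼ + zᵢ)·(t·zₖ + zᵢ)·s·(zⱼ - zₖ) + s·(zᵢ - zⱼ)·(t·zₖ + zᵢ)·(t·zₖ + zⱼ). -/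
theorem stmt3 {F : Type*} [Field F] (zi zj zk t s : F) (hs : s ^ 2 = -t) (hs0 : s ≠ 0) :
    (t * zj + zi) * (s * (zi - zk)) * (t * zk + zj) =
      s * (zi - zj) * (s * (zi - zk)) * (s * (zj - zk)) -
      (s + 1 / s) * (s * (zi - zj)) * (t * zk + zi) * (s * (zj - zk)) +
      (t * zj + zi) * (t * zk + zi) * (s * (zj - zk)) +
      s * (zi - zj) * (t * zk + zi) * (t * zk + zj) := by
  have ht : t = -(s^2) := by rw [hs]; ring
  subst ht
  field_simp
  ring
end

section
/- The pair (α(i,j), β(i,j)) = ((tⱼ+1)·zⱼ·tᵢ, (tᵢ+1)·zᵢ) solves the right fish equation with constant c(i,j) = a₁ = tⱼ·zᵢ + zⱼ: (tᵢ·zᵢ + zᵢ)·(tⱼ+1)·zⱼ + (zᵢ - zⱼ)·(tᵢ+1)·zᵢ·tⱼ = (tⱼ·zᵢ + zⱼ)·(tᵢ+1)·zᵢ and (tⱼ·zⱼ + zⱼ)·(tᵢ+1)·zᵢ·tⱼ + (tᵢ·zⱼ - tⱼ·zᵢ)·(tⱼ+1)·zⱼ = (tⱼ·zᵢ + zⱼ)·(tⱼ+1)·zⱼ·tᵢ.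 -/
theorem stmt11 {R : Type*} [CommRing R] (zi zj ti tj : R) :
    (ti * zi + zi) * ((tj + 1) * zj) + (zi - zj) * ((ti + 1) * zi * tj) =
      (tj * zi + zj) * ((ti + 1) * zi) ∧
    (tj * zj + zj) * ((ti + 1) * zi * tj) + (ti * zj - tj * zi) * ((tj + 1) * zj) =
      (tj * zi + zj) * ((tj + 1) * zj * ti) := by constructor <;> ring
end
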